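/- For every v ∈ ℝ, T_3(v) = √(π/2)·(3(2v² + 1)φ(v) − (2v² − 3)v(1 − Φ(v))). -/

import Mathlib

/-- The Hermite polynomials `H_n(x) = (-1)^n e^{x²} (d/dx)^n e^{-x²}`. -/
noncomputable def hermiteH (n : ℕ) (x : ℝ) : ℝ :=
  (-1 : ℝ) ^ n * Real.exp (x ^ 2) * iteratedDeriv n (fun y => Real.exp (-y ^ 2)) x

/-- `I_n(v) = ∫_v^∞ e^{-t²/2} H_n(t) dt`. -/
noncomputable def hermiteI (n : ℕ) (v : ℝ) : ℝ :=
  ∫ t in Set.Ioi v, Real.exp (-t ^ 2 / 2) * hermiteH n t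

/-- The standard Gaussian density `φ`. -/
noncomputable def gaussphi (x : ℝ) : ℝ :=
  (Real.sqrt (2 * Real.pi))⁻¹ * Real.exp (-x ^ 2 / 2)

/-- The standard Gaussian distribution function `Φ`. -/
noncomputable def gaussPhi (x : ℝ) : ℝ :=
  ∫ y in Set.Iic x, gaussphi y

/-- `T_j(v) = (Σ_{k<j} H_k(v)²/(2^k k!)) e^{-v²/2} - (H_j(v)/(2^j (j-1)!)) I_{j-1}(v)`,
for `j ≥ 1`. -/
noncomputable def hermiteT (j : ℕ) (v : ℝ) : ℝ :=
  (∑ k ∈ Finset.range j, (hermiteH k v) ^ 2 / (2 ^ k * (Nat.factorial k : ℝ)))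
      * Real.exp (-v ^ 2 / 2)
    - (hermiteH j v / (2 ^ j * (Nat.factorial (j - 1) : ℝ))) * hermiteI (j - 1) v

/-!
Differentiating `e^{-x²}` once more gives the recursion `H_{n+1} = 2x H_n - H_n'`, whence
`H_0 = 1`, `H_1 = 2x`, `H_2 = 4x² - 2`, `H_3 = 8x³ - 12x`. The only integral in `T_3` is
`I_2(v) = ∫_v^∞ (4t² - 2) e^{-t²/2} dt`; since `(t e^{-t²/2})' = (1 - t²) e^{-t²/2}` it equals
`4v e^{-v²/2} + 2 ∫_v^∞ e^{-t²/2} dt`, and the Gaussian tail integral is `√(2π) (1 - Φ(v))`.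
What remains is algebra in `e^{-v²/2}`, `Φ(v)` and `√(2π) = 2√(π/2)`.
-/

open Real MeasureTheory Filter Set Topology

lemma neg_one_pow_mul_self (n : ℕ) : (-1 : ℝ) ^ n * (-1) ^ n = 1 := by
  rw [← mul_pow]; norm_num

lemma exp_sq_mul_exp_neg_sq (x : ℝ) : exp (x ^ 2) * exp (-x ^ 2) = 1 := by
  rw [← exp_add]; simp

lemma iteratedDeriv_exp_neg_sq (n : ℕ) :
    iteratedDeriv n (fun y => exp (-y ^ 2))
      = fun x => (-1) ^ n * (hermiteH n x * exp (-x ^ 2)) := by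
  funext x
  set D := iteratedDeriv n (fun y => exp (-y ^ 2)) x
  rw [hermiteH]
  linear_combination (-D * exp (x ^ 2) * exp (-x ^ 2)) * neg_one_pow_mul_self n
    - D * exp_sq_mul_exp_neg_sq x

lemma hermiteH_succ_of_hasDerivAt {n : ℕ} {H' : ℝ → ℝ}
    (hH : ∀ y, HasDerivAt (hermiteH n) (H' y) y) (x : ℝ) :
    hermiteH (n + 1) x = 2 * x * hermiteH n x - H' x := by
  have hderiv : HasDerivAt (fun y => (-1) ^ n * (hermiteH n y * exp (-y ^ 2)))
      ((-1) ^ n * (H' x * exp (-x ^ 2) + hermiteH n x * (exp (-x ^ 2) * -(2 * x)))) x := by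
    simpa using ((hH x).mul ((hasDerivAt_pow 2 x).neg.exp)).const_mul ((-1 : ℝ) ^ n)
  set c := H' x - 2 * x * hermiteH n x
  rw [hermiteH, iteratedDeriv_succ, iteratedDeriv_exp_neg_sq, hderiv.deriv]
  linear_combination (-c * exp (x ^ 2) * exp (-x ^ 2)) * neg_one_pow_mul_self n
    - c * exp_sq_mul_exp_neg_sq x

lemma hermiteH_zero : hermiteH 0 = fun _ => 1 := by
  funext x
  simp [hermiteH, exp_sq_mul_exp_neg_sq]

lemma hermiteH_one : hermiteH 1 = fun x => 2 * x := by
  funext x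
  rw [hermiteH_succ_of_hasDerivAt (H' := fun _ => 0) fun y => hermiteH_zero ▸ hasDerivAt_const y 1,
    hermiteH_zero]
  ring

lemma hermiteH_two : hermiteH 2 = fun x => 4 * x ^ 2 - 2 := by
  funext x
  rw [hermiteH_succ_of_hasDerivAt (H' := fun _ => 2)
    fun y => hermiteH_one ▸ by simpa using (hasDerivAt_id y).const_mul 2, hermiteH_one]
  ring

lemma hermiteH_three : hermiteH 3 = fun x => 8 * x ^ 3 - 12 * x := by
  funext x
  rw [hermiteH_succ_of_hasDerivAt (H' := fun y => 8 * y)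
    fun y => hermiteH_two ▸ (((hasDerivAt_pow 2 y).const_mul 4).sub_const 2).congr_deriv (by ring),
    hermiteH_two]
  ring

lemma integrable_pow_mul_exp_neg_sq_div_two (n : ℕ) :
    Integrable fun t : ℝ => t ^ n * exp (-t ^ 2 / 2) := by
  have h := integrable_rpow_mul_exp_neg_mul_sq (b := 1 / 2) (by norm_num) (s := n)
    (by linarith [(n.cast_nonneg : (0 : ℝ) ≤ n)])
  refine h.congr (Eventually.of_forall fun t => ?_)
  simp only [rpow_natCast]
  ring_nf

lemma integrable_exp_neg_sq_div_two : Integrable fun t : ℝ => exp (-t ^ 2 / 2) := by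
  simpa using integrable_pow_mul_exp_neg_sq_div_two 0

lemma integral_Ioi_exp_neg_sq_div_two (v : ℝ) :
    ∫ t in Ioi v, exp (-t ^ 2 / 2) = √(2 * π) * (1 - gaussPhi v) := by
  have htotal : ∫ t : ℝ, exp (-t ^ 2 / 2) = √(2 * π) :=
    calc ∫ t : ℝ, exp (-t ^ 2 / 2) = ∫ t : ℝ, exp (-(1 / 2) * t ^ 2) := by ring_nf
      _ = √(2 * π) := by rw [integral_gaussian]; ring_nf
  have hsplit := intervalIntegral.integral_Iic_add_Ioi (b := v)
    integrable_exp_neg_sq_div_two.integrableOn integrable_exp_neg_sq_div_two.integrableOn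
  have hPhi : gaussPhi v = (√(2 * π))⁻¹ * ∫ t in Iic v, exp (-t ^ 2 / 2) := by
    simp only [gaussPhi, gaussphi, integral_const_mul]
  have hpos : 0 < √(2 * π) := by positivity
  rw [hPhi, mul_sub, mul_one, mul_inv_cancel_left₀ hpos.ne']
  linarith

lemma integral_Ioi_sq_mul_exp_neg_sq_div_two (v : ℝ) :
    ∫ t in Ioi v, t ^ 2 * exp (-t ^ 2 / 2)
      = v * exp (-v ^ 2 / 2) + ∫ t in Ioi v, exp (-t ^ 2 / 2) := by
  have hderiv : ∀ x : ℝ, HasDerivAt (fun t => t * exp (-t ^ 2 / 2))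
      (exp (-x ^ 2 / 2) - x ^ 2 * exp (-x ^ 2 / 2)) x := fun x =>
    ((hasDerivAt_id x).mul ((hasDerivAt_pow 2 x).neg.div_const 2).exp).congr_deriv (by simp; ring)
  have hint := integrable_exp_neg_sq_div_two.sub (integrable_pow_mul_exp_neg_sq_div_two 2)
  -- a function that is integrable together with its derivative tends to `0` at `+∞`
  have hlim : Tendsto (fun t => t * exp (-t ^ 2 / 2)) atTop (𝓝 0) :=
    tendsto_zero_of_hasDerivAt_of_integrableOn_Ioi (a := 0) (fun x _ => hderiv x)
      hint.integrableOn (by simpa using (integrable_pow_mul_exp_neg_sq_div_two 1).integrableOn)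
  have hftc := integral_Ioi_of_hasDerivAt_of_tendsto' (a := v) (fun x _ => hderiv x)
    hint.integrableOn hlim
  rw [integral_sub integrable_exp_neg_sq_div_two.integrableOn
    (integrable_pow_mul_exp_neg_sq_div_two 2).integrableOn] at hftc
  linarith

lemma hermiteI_two (v : ℝ) :
    hermiteI 2 v = 4 * v * exp (-v ^ 2 / 2) + 2 * ∫ t in Ioi v, exp (-t ^ 2 / 2) := by
  have hintegrand : (fun t => exp (-t ^ 2 / 2) * hermiteH 2 t)
      = fun t => 4 * (t ^ 2 * exp (-t ^ 2 / 2)) - 2 * exp (-t ^ 2 / 2) := by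
    funext t; rw [hermiteH_two]; ring
  rw [hermiteI, hintegrand, integral_sub, integral_const_mul, integral_const_mul,
    integral_Ioi_sq_mul_exp_neg_sq_div_two]
  · ring
  · exact ((integrable_pow_mul_exp_neg_sq_div_two 2).const_mul 4).integrableOn
  · exact (integrable_exp_neg_sq_div_two.const_mul 2).integrableOn

lemma sqrt_two_mul_pi : √(2 * π) = 2 * √(π / 2) := by
  rw [show 2 * π = 2 ^ 2 * (π / 2) by ring, sqrt_mul (by positivity), sqrt_sq zero_le_two]

/-- `T_3(v) = √(π/2)(3(2v² + 1)φ(v) - (2v² - 3)v(1 - Φ(v)))`. -/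
theorem hermiteT_three (v : ℝ) :
    hermiteT 3 v = Real.sqrt (Real.pi / 2) *
      (3 * (2 * v ^ 2 + 1) * gaussphi v - (2 * v ^ 2 - 3) * v * (1 - gaussPhi v)) := by
  have hI : hermiteI (3 - 1) v
      = 4 * v * exp (-v ^ 2 / 2) + 4 * √(π / 2) * (1 - gaussPhi v) := by
    rw [hermiteI_two, integral_Ioi_exp_neg_sq_div_two, sqrt_two_mul_pi]
    ring
  have hpos : 0 < √(π / 2) := by positivity
  simp only [hermiteT, Finset.sum_range_succ, Finset.sum_range_zero, hermiteH_zero, hermiteH_one,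
    hermiteH_two, hermiteH_three, hI, gaussphi, sqrt_two_mul_pi]
  norm_num [Nat.factorial]
  field_simp
  ring
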